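/- Under the hypotheses of the unbiasedness Proposition (an SMC particle system with M particles, strictly positive incremental weights α_n, multinomial resampling at fixed times τ_1 < ⋯ < τ_r with resampling probabilities V_{τ_s}^{(j)} proportional to the accumulated incremental weights since the previous resampling, conditionally independent propagation according to the proposal kernels between resampling times, and L_N(X_{1:N}) integrable), the SMC estimate of the normalizing constant is unbiased: E[Z_N^M] = Z_N, where Z_N^M = ∏_{s=1}^{r+1} v̄_{τ_s} and Z_N = ∫ γ_N. -/

import Mathlib

open MeasureTheory ProbabilityTheory
open ENNReal

lemma smc_iSup_min (a : ℝ≥0∞) : ⨆ n : ℕ, min a n = a := by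
  apply le_antisymm (iSup_le fun n => min_le_left _ _)
  by_cases ha : a = ⊤
  · subst ha
    have htop : ⨆ n : ℕ, ((n : ℝ≥0∞)) = ⊤ :=
      iSup_eq_top.2 fun b hb => ENNReal.exists_nat_gt (lt_top_iff_ne_top.1 hb)
    calc (⊤ : ℝ≥0∞) = ⨆ n : ℕ, ((n : ℝ≥0∞)) := htop.symm
      _ ≤ ⨆ n : ℕ, min ⊤ (n : ℝ≥0∞) := by simp
  · obtain ⟨n, hn⟩ := ENNReal.exists_nat_gt ha
    calc a = min a n := (min_eq_left hn.le).symm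
      _ ≤ ⨆ n : ℕ, min a n := le_iSup (fun n : ℕ => min a (n : ℝ≥0∞)) n

lemma smc_int_bdd {Ω : Type*} {mΩ : MeasurableSpace Ω} {P : Measure Ω} [IsProbabilityMeasure P]
    {g : Ω → ℝ} (hg : AEStronglyMeasurable g P) {C : ℝ} (hC : ∀ ω, |g ω| ≤ C) :
    Integrable g P := by
  refine Integrable.mono' (integrable_const C) hg ?_
  exact Filter.Eventually.of_forall fun ω => by simpa [Real.norm_eq_abs] using hC ω

lemma smc_pullout {Ω : Type*} {mΩ : MeasurableSpace Ω} {P : Measure Ω} [IsProbabilityMeasure P]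
    {m : MeasurableSpace Ω} (hm : m ≤ mΩ) {g h : Ω → ℝ}
    (hgint : Integrable g P) (hg0 : 0 ≤ g)
    (hcond : P[g|m] =ᵐ[P] h)
    {F : Ω → ℝ≥0∞} (hF : Measurable[m] F) :
    ∫⁻ ω, ENNReal.ofReal (g ω) * F ω ∂P = ∫⁻ ω, ENNReal.ofReal (h ω) * F ω ∂P := by
  have hh0 : 0 ≤ᵐ[P] h := by
    filter_upwards [condExp_nonneg (μ := P) (m := m) (Filter.Eventually.of_forall hg0), hcond]
      with ω h1 h2
    rw [← h2]; exact h1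
  have hhint : Integrable h P := integrable_condExp.congr hcond
  have hFm : Measurable[mΩ] F := hF.mono hm le_rfl
  set Fn : ℕ → Ω → ℝ≥0∞ := fun n ω => min (F ω) n with hFn
  set fn : ℕ → Ω → ℝ := fun n ω => (Fn n ω).toReal with hfn
  have hFnm : ∀ n, Measurable[m] (Fn n) := fun n => hF.min measurable_const
  have hFnne : ∀ n ω, Fn n ω ≠ ⊤ := fun n ω =>
    ne_top_of_le_ne_top (natCast_ne_top n) (min_le_right _ _)
  have hfnm : ∀ n, Measurable[m] (fn n) := fun n => (hFnm n).ennreal_toReal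
  have hfn0 : ∀ n ω, 0 ≤ fn n ω := fun n ω => ENNReal.toReal_nonneg
  have hfnbdd : ∀ n ω, |fn n ω| ≤ (n : ℝ) := by
    intro n ω
    rw [abs_of_nonneg (hfn0 n ω)]
    have : Fn n ω ≤ (n : ℝ≥0∞) := min_le_right _ _
    simpa using ENNReal.toReal_mono (natCast_ne_top n) this
  have key : ∀ n : ℕ, ∫⁻ ω, ENNReal.ofReal (g ω) * Fn n ω ∂P
      = ∫⁻ ω, ENNReal.ofReal (h ω) * Fn n ω ∂P := by
    intro n
    have hfmΩ : Measurable[mΩ] (fn n) := (hfnm n).mono hm le_rfl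
    have hfgint : Integrable (fn n * g) P :=
      hgint.bdd_mul hfmΩ.aestronglyMeasurable
        (c := n) (Filter.Eventually.of_forall fun ω => by simpa [Real.norm_eq_abs] using hfnbdd n ω)
    have hfhint : Integrable (fn n * h) P :=
      hhint.bdd_mul hfmΩ.aestronglyMeasurable
        (c := n) (Filter.Eventually.of_forall fun ω => by simpa [Real.norm_eq_abs] using hfnbdd n ω)
    have hpull := condExp_mul_of_stronglyMeasurable_left (μ := P)
      ((hfnm n).stronglyMeasurable) hfgint hgint
    have hint_eq : ∫ ω, fn n ω * g ω ∂P = ∫ ω, fn n ω * h ω ∂P := by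
      calc ∫ ω, fn n ω * g ω ∂P = ∫ ω, (P[fn n * g|m]) ω ∂P :=
            (integral_condExp hm).symm
        _ = ∫ ω, (fn n ω) * (P[g|m]) ω ∂P := integral_congr_ae hpull
        _ = ∫ ω, fn n ω * h ω ∂P := integral_congr_ae <| by
            filter_upwards [hcond] with ω hω; rw [hω]
    have l1 : ∫⁻ ω, ENNReal.ofReal (fn n ω * g ω) ∂P = ENNReal.ofReal (∫ ω, fn n ω * g ω ∂P) :=
      (ofReal_integral_eq_lintegral_ofReal hfgint
        (Filter.Eventually.of_forall fun ω => mul_nonneg (hfn0 n ω) (hg0 ω))).symm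
    have l2 : ∫⁻ ω, ENNReal.ofReal (fn n ω * h ω) ∂P = ENNReal.ofReal (∫ ω, fn n ω * h ω ∂P) :=
      (ofReal_integral_eq_lintegral_ofReal hfhint
        (hh0.mono fun ω hω => mul_nonneg (hfn0 n ω) hω)).symm
    have e1 : ∀ ω, ENNReal.ofReal (fn n ω * g ω) = ENNReal.ofReal (g ω) * Fn n ω := by
      intro ω
      rw [ENNReal.ofReal_mul (hfn0 n ω), ENNReal.ofReal_toReal (hFnne n ω), mul_comm]
    have e2 : ∀ ω, ENNReal.ofReal (fn n ω * h ω) = ENNReal.ofReal (h ω) * Fn n ω := by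
      intro ω
      rw [ENNReal.ofReal_mul (hfn0 n ω), ENNReal.ofReal_toReal (hFnne n ω), mul_comm]
    calc ∫⁻ ω, ENNReal.ofReal (g ω) * Fn n ω ∂P
        = ∫⁻ ω, ENNReal.ofReal (fn n ω * g ω) ∂P := by simp_rw [e1]
      _ = ENNReal.ofReal (∫ ω, fn n ω * g ω ∂P) := l1
      _ = ENNReal.ofReal (∫ ω, fn n ω * h ω ∂P) := by rw [hint_eq]
      _ = ∫⁻ ω, ENNReal.ofReal (fn n ω * h ω) ∂P := l2.symm
      _ = ∫⁻ ω, ENNReal.ofReal (h ω) * Fn n ω ∂P := by simp_rw [e2]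
  have hmono : ∀ (u : Ω → ℝ), ∀ ω, Monotone fun n : ℕ => ENNReal.ofReal (u ω) * Fn n ω := by
    intro u ω a b hab
    exact mul_le_mul_right (min_le_min le_rfl (Nat.cast_le.2 hab)) _
  have hsup : ∀ (u : Ω → ℝ) ω, (⨆ n : ℕ, ENNReal.ofReal (u ω) * Fn n ω)
      = ENNReal.ofReal (u ω) * F ω := by
    intro u ω
    rw [← ENNReal.mul_iSup]
    congr 1
    exact smc_iSup_min (F ω)
  have hgm : AEMeasurable (fun ω => ENNReal.ofReal (g ω)) P :=
    ENNReal.measurable_ofReal.comp_aemeasurable hgint.aemeasurable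
  have hhm : AEMeasurable (fun ω => ENNReal.ofReal (h ω)) P :=
    ENNReal.measurable_ofReal.comp_aemeasurable hhint.aemeasurable
  calc ∫⁻ ω, ENNReal.ofReal (g ω) * F ω ∂P
      = ∫⁻ ω, ⨆ n : ℕ, ENNReal.ofReal (g ω) * Fn n ω ∂P := by
        refine lintegral_congr fun ω => (hsup g ω).symm
    _ = ⨆ n : ℕ, ∫⁻ ω, ENNReal.ofReal (g ω) * Fn n ω ∂P := by
        refine lintegral_iSup' (fun n => hgm.mul ((hFnm n).mono hm le_rfl).aemeasurable) ?_
        exact Filter.Eventually.of_forall fun ω => hmono g ω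
    _ = ⨆ n : ℕ, ∫⁻ ω, ENNReal.ofReal (h ω) * Fn n ω ∂P := by simp_rw [key]
    _ = ∫⁻ ω, ⨆ n : ℕ, ENNReal.ofReal (h ω) * Fn n ω ∂P := by
        refine (lintegral_iSup' (fun n => hhm.mul ((hFnm n).mono hm le_rfl).aemeasurable) ?_).symm
        exact Filter.Eventually.of_forall fun ω => hmono h ω
    _ = ∫⁻ ω, ENNReal.ofReal (h ω) * F ω ∂P := lintegral_congr fun ω => hsup h ω

/-- Unbiasedness of the SMC estimate of the normalizing constant (the paper's main
theoretical result): under the hypotheses of the Proposition in the appendix, with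
`L_N` integrable, `E[Z_N^M] = Z_N` where `Z_N^M = ∏_{s=1}^{r+1} v̄_{τ_s}`. -/
theorem smc_normalizing_constant_unbiased
    {𝒳 : Type*} [MeasurableSpace 𝒳]
    {Ω : Type*} {mΩ : MeasurableSpace Ω} (P : Measure Ω) [IsProbabilityMeasure P]
    (N M r : ℕ) (hM : 1 ≤ M) (hN : 1 ≤ N)
    (τ : ℕ → ℕ) (hτ0 : τ 0 = 0) (hτmono : ∀ s, s ≤ r → τ s < τ (s + 1))
    (hτN : τ (r + 1) = N)
    -- the proposal law `Q` on path space and its conditional kernels `κ n` given the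
    -- first `n` coordinates (composition of the proposal kernels `q_{n+1}, q_{n+2}, …`)
    (Q : Measure (ℕ → 𝒳)) [IsProbabilityMeasure Q]
    (κ : ℕ → Kernel (ℕ → 𝒳) (ℕ → 𝒳)) [∀ n, IsMarkovKernel (κ n)]
    (hκsupp : ∀ n x, (κ n x) {y | ∀ k, 1 ≤ k → k ≤ n → y k = x k} = 1)
    (hκloc : ∀ n x y, (∀ k, 1 ≤ k → k ≤ n → x k = y k) → κ n x = κ n y)
    (hκQ : ∀ n, n ≤ N → Q.bind (κ n) = Q)
    (hκcomp : ∀ m n, m ≤ n → n ≤ N → ∀ x, (κ m x).bind (κ n) = κ m x)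
    -- strictly positive incremental weights
    (α : ℕ → (ℕ → 𝒳) → ℝ) (hαmeas : ∀ n, Measurable (α n))
    (hαpos : ∀ n x, 0 < α n x)
    (hαloc : ∀ n x y, (∀ k, 1 ≤ k → k ≤ n → x k = y k) → α n x = α n y)
    -- normalizing constant and likelihood ratio `L_N = π_N / ∏ q_n = (∏ α_n) / Z_N`
    (ZN : ℝ) (hZNpos : 0 < ZN)
    (hZN : ∫ x, ∏ n ∈ Finset.Icc 1 N, α n x ∂Q = ZN)
    (L : (ℕ → 𝒳) → ℝ) (hL : ∀ x, L x = (∏ n ∈ Finset.Icc 1 N, α n x) / ZN)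
    (hLint : Integrable L Q)
    -- the particle system: `X s i` is particle `i`'s path just before the `s`-th
    -- resampling, `Xbar s i` the path just after it; `𝓕` is the filtration
    (𝓕 : ℕ → MeasurableSpace Ω)
    (h𝓕le : ∀ k, 𝓕 k ≤ mΩ) (h𝓕mono : Monotone 𝓕)
    (X Xbar : ℕ → Fin M → Ω → (ℕ → 𝒳))
    (hXmeas : ∀ s, 1 ≤ s → s ≤ r + 1 → ∀ i, Measurable[𝓕 (2 * s - 1)] (X s i))
    (hXbarmeas : ∀ s, 1 ≤ s → s ≤ r → ∀ i, Measurable[𝓕 (2 * s)] (Xbar s i))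
    -- accumulated incremental weights and resampling probabilities
    (v : ℕ → Fin M → Ω → ℝ)
    (hv : ∀ s, 1 ≤ s → s ≤ r + 1 → ∀ i ω,
      v s i ω = ∏ n ∈ Finset.Icc (τ (s - 1) + 1) (τ s), α n (X s i ω))
    (vbar : ℕ → Ω → ℝ)
    (hvbar : ∀ s, 1 ≤ s → s ≤ r + 1 → ∀ ω, vbar s ω = (∑ j, v s j ω) / M)
    (V : ℕ → Fin M → Ω → ℝ)
    (hV : ∀ s, 1 ≤ s → s ≤ r + 1 → ∀ i ω, V s i ω = v s i ω / (M * vbar s ω))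
    -- (i) multinomial resampling: conditionally on `𝓕 (2s−1)` the resampled paths are
    -- i.i.d., each equal to `X s j` with probability `V s j`
    (I : ℕ → Fin M → Ω → Fin M)
    (hXbarI : ∀ s, 1 ≤ s → s ≤ r → ∀ i ω, Xbar s i ω = X s (I s i ω) ω)
    (hresample : ∀ s, 1 ≤ s → s ≤ r → ∀ js : Fin M → Fin M,
      P[(fun ω => ({ω' | ∀ i, I s i ω' = js i} : Set Ω).indicator
          (fun _ => (1 : ℝ)) ω) | 𝓕 (2 * s - 1)]
        =ᵐ[P] fun ω => ∏ i, V s (js i) ω)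
    -- (ii) conditionally independent propagation according to the proposal kernels,
    -- extending the resampled ancestors
    (hXext : ∀ s, 1 ≤ s → s ≤ r → ∀ i ω k, 1 ≤ k → k ≤ τ s →
      X (s + 1) i ω k = Xbar s i ω k)
    (hinit : ∀ f : Fin M → (ℕ → 𝒳) → ℝ,
      (∀ i, Measurable (f i)) → (∀ i, ∃ C, ∀ x, |f i x| ≤ C) →
      ∫ ω, ∏ i, f i (X 1 i ω) ∂P = ∏ i : Fin M, ∫ y, f i y ∂Q)
    (hprop : ∀ s, 1 ≤ s → s ≤ r → ∀ f : Fin M → (ℕ → 𝒳) → ℝ,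
      (∀ i, Measurable (f i)) → (∀ i, ∃ C, ∀ x, |f i x| ≤ C) →
      P[(fun ω => ∏ i, f i (X (s + 1) i ω)) | 𝓕 (2 * s)]
        =ᵐ[P] fun ω => ∏ i, ∫ y, f i y ∂(κ (τ s) (Xbar s i ω)))
    -- the SMC normalizing-constant estimate
    (ZNM : Ω → ℝ)
    (hZNM : ∀ ω, ZNM ω = ∏ s ∈ Finset.Icc 1 (r + 1), vbar s ω) :
    ∫ ω, ZNM ω ∂P = ZN := by
  classical
  -- ### basic τ facts
  have hτmono' : ∀ a b, a ≤ b → b ≤ r + 1 → τ a ≤ τ b := by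
    intro a b hab hb
    induction hab with
    | refl => exact le_rfl
    | @step m h ih =>
        exact le_trans (ih (by omega)) (le_of_lt (hτmono m (by omega)))
  have hτle : ∀ s, s ≤ r + 1 → τ s ≤ N := fun s hs => hτN ▸ hτmono' s (r + 1) hs le_rfl
  -- ### basic positivity
  have hppos : ∀ (a b : ℕ) (y : ℕ → 𝒳), 0 < ∏ n ∈ Finset.Icc a b, α n y :=
    fun a b y => Finset.prod_pos fun n _ => hαpos n y
  have hvpos : ∀ s, 1 ≤ s → s ≤ r + 1 → ∀ i ω, 0 < v s i ω := by
    intro s h1 h2 i ω; rw [hv s h1 h2 i ω]; exact hppos _ _ _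
  haveI : Nonempty (Fin M) := ⟨⟨0, hM⟩⟩
  have hvbarpos : ∀ s, 1 ≤ s → s ≤ r + 1 → ∀ ω, 0 < vbar s ω := by
    intro s h1 h2 ω; rw [hvbar s h1 h2 ω]
    exact div_pos (Finset.sum_pos (fun j _ => hvpos s h1 h2 j ω) Finset.univ_nonempty)
      (by exact_mod_cast hM)
  have hVpos : ∀ s, 1 ≤ s → s ≤ r + 1 → ∀ i ω, 0 < V s i ω := by
    intro s h1 h2 i ω; rw [hV s h1 h2 i ω]
    exact div_pos (hvpos s h1 h2 i ω)
      (mul_pos (by exact_mod_cast hM) (hvbarpos s h1 h2 ω))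
  have hVsum : ∀ s, 1 ≤ s → s ≤ r + 1 → ∀ ω, ∑ j, V s j ω = 1 := by
    intro s h1 h2 ω
    have h3 : (0:ℝ) < M := by exact_mod_cast hM
    have h4 := hvbarpos s h1 h2 ω
    have h5 : ∑ j, v s j ω = M * vbar s ω := by
      rw [hvbar s h1 h2 ω]; field_simp
    calc ∑ j, V s j ω = ∑ j, v s j ω / (M * vbar s ω) := by
          refine Finset.sum_congr rfl fun j _ => hV s h1 h2 j ω
      _ = (∑ j, v s j ω) / (M * vbar s ω) := by rw [Finset.sum_div]
      _ = 1 := by rw [h5]; field_simp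
  have hVvbar : ∀ s, 1 ≤ s → s ≤ r + 1 → ∀ i ω,
      V s i ω * vbar s ω = v s i ω * (M:ℝ)⁻¹ := by
    intro s h1 h2 i ω
    have h3 : (0:ℝ) < M := by exact_mod_cast hM
    have h4 := hvbarpos s h1 h2 ω
    rw [hV s h1 h2 i ω]; field_simp
  -- ### the ℝ≥0∞-valued objects
  set Ψ : ℕ → (ℕ → 𝒳) → ℝ≥0∞ :=
    fun b y => ENNReal.ofReal (∏ n ∈ Finset.Icc (b+1) N, α n y) with hΨ
  set Φ : ℕ → ℕ → (ℕ → 𝒳) → ℝ≥0∞ :=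
    fun a b y => ENNReal.ofReal (∏ n ∈ Finset.Icc (a+1) b, α n y) with hΦ
  set H : ℕ → (ℕ → 𝒳) → ℝ≥0∞ := fun b x => ∫⁻ y, Ψ b y ∂(κ b x) with hH
  set 𝕎 : ℕ → Ω → ℝ≥0∞ :=
    fun s ω => ∏ t ∈ Finset.Icc 1 s, ENNReal.ofReal (vbar t ω) with h𝕎
  have hΨm : ∀ b, Measurable (Ψ b) := fun b =>
    (Finset.measurable_prod _ fun n _ => hαmeas n).ennreal_ofReal
  have hΦm : ∀ a b, Measurable (Φ a b) := fun a b =>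
    (Finset.measurable_prod _ fun n _ => hαmeas n).ennreal_ofReal
  have hHm : ∀ b, Measurable (H b) := fun b =>
    Measurable.lintegral_kernel_prod_right' ((hΨm b).comp measurable_snd)
  -- ### a.e. locality for kernels
  have hae : ∀ (b : ℕ) (x : ℕ → 𝒳) (g : (ℕ → 𝒳) → ℝ), Measurable g →
      (∀ z, (∀ k, 1 ≤ k → k ≤ b → z k = x k) → g z = g x) →
      ∀ᵐ z ∂(κ b x), g z = g x := by
    intro b x g hg hloc
    have hT : MeasurableSet {z | g z = g x} := hg (measurableSet_singleton (g x))
    have hsub : {y | ∀ k, 1 ≤ k → k ≤ b → y k = x k} ⊆ {z | g z = g x} :=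
      fun z hz => hloc z hz
    have h1 : (κ b x) {z | g z = g x} = 1 := by
      refine le_antisymm prob_le_one ?_
      rw [← hκsupp b x]
      exact measure_mono hsub
    have h0 : (κ b x) {z | g z = g x}ᶜ = 0 := by
      rw [measure_compl hT (measure_ne_top _ _), h1, measure_univ, tsub_self]
    exact (ae_iff).2 h0
  -- ### kernel collapse
  have hptwise : ∀ a b, a ≤ b → b ≤ N → ∀ y,
      Φ a b y * H b y = ∫⁻ z, Ψ a z ∂(κ b y) := by
    intro a b hab hbN y
    have hloc' : ∀ z, (∀ k, 1 ≤ k → k ≤ b → z k = y k) →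
        (∏ n ∈ Finset.Icc (a+1) b, α n z) = ∏ n ∈ Finset.Icc (a+1) b, α n y := by
      intro z hz
      refine Finset.prod_congr rfl fun n hn => hαloc n z y fun k hk1 hk2 =>
        hz k hk1 (hk2.trans (Finset.mem_Icc.1 hn).2)
    have hae' := hae b y _ (Finset.measurable_prod _ fun n _ => hαmeas n) hloc'
    calc Φ a b y * H b y = ∫⁻ z, Φ a b y * Ψ b z ∂(κ b y) :=
          (lintegral_const_mul _ (hΨm b)).symm
      _ = ∫⁻ z, Φ a b z * Ψ b z ∂(κ b y) := by
          refine lintegral_congr_ae (hae'.mono fun z hz => ?_)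
          simp only [hΦ]
          rw [hz]
      _ = ∫⁻ z, Ψ a z ∂(κ b y) := by
          refine lintegral_congr fun z => ?_
          simp only [hΦ, hΨ]
          rw [← ENNReal.ofReal_mul (le_of_lt (hppos _ _ _))]
          congr 1
          rw [Finset.Icc_add_one_left_eq_Ioc, Finset.Icc_add_one_left_eq_Ioc, Finset.Icc_add_one_left_eq_Ioc]
          exact Finset.prod_Ioc_consecutive _ hab hbN
  have hbindver : ∀ a b, a ≤ b → b ≤ N → ∀ (μ : Measure (ℕ → 𝒳)),
      ∫⁻ y, Φ a b y * H b y ∂μ = ∫⁻ z, Ψ a z ∂(μ.bind (κ b)) := by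
    intro a b hab hbN μ
    rw [Measure.lintegral_bind (κ b).measurable.aemeasurable (hΨm a).aemeasurable]
    exact lintegral_congr fun y => hptwise a b hab hbN y
  -- ### measurability of particle-level objects
  have hXm : ∀ s, 1 ≤ s → s ≤ r + 1 → ∀ i, Measurable[mΩ] (X s i) :=
    fun s h1 h2 i => (hXmeas s h1 h2 i).mono (h𝓕le _) le_rfl
  have hXbarm : ∀ s, 1 ≤ s → s ≤ r → ∀ i, Measurable[mΩ] (Xbar s i) :=
    fun s h1 h2 i => (hXbarmeas s h1 h2 i).mono (h𝓕le _) le_rfl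
  have hvmF : ∀ s, 1 ≤ s → s ≤ r + 1 → ∀ i, Measurable[𝓕 (2*s-1)] (v s i) := by
    intro s h1 h2 i
    have : v s i = fun ω => ∏ n ∈ Finset.Icc (τ (s-1) + 1) (τ s), α n (X s i ω) :=
      funext fun ω => hv s h1 h2 i ω
    rw [this]
    exact Finset.measurable_prod _ fun n _ => (hαmeas n).comp (hXmeas s h1 h2 i)
  have hvbarmF : ∀ s, 1 ≤ s → s ≤ r + 1 → Measurable[𝓕 (2*s-1)] (vbar s) := by
    intro s h1 h2
    have : vbar s = fun ω => (∑ j, v s j ω) / M := funext fun ω => hvbar s h1 h2 ω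
    rw [this]
    exact (Finset.measurable_sum _ fun j _ => hvmF s h1 h2 j).div measurable_const
  have hVmF : ∀ s, 1 ≤ s → s ≤ r + 1 → ∀ i, Measurable[𝓕 (2*s-1)] (V s i) := by
    intro s h1 h2 i
    have : V s i = fun ω => v s i ω / (M * vbar s ω) := funext fun ω => hV s h1 h2 i ω
    rw [this]
    exact (hvmF s h1 h2 i).div (measurable_const.mul (hvbarmF s h1 h2))
  have h𝕎mF : ∀ s, s ≤ r + 1 → Measurable[𝓕 (2*s-1)] (𝕎 s) := by
    intro s h2
    refine Finset.measurable_prod _ fun t ht => ?_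
    obtain ⟨ht1, ht2⟩ := Finset.mem_Icc.1 ht
    refine ((hvbarmF t ht1 (ht2.trans h2)).mono (h𝓕mono (by omega)) le_rfl).ennreal_ofReal
  have h𝕎m : ∀ s, s ≤ r + 1 → Measurable[mΩ] (𝕎 s) :=
    fun s h2 => (h𝕎mF s h2).mono (h𝓕le _) le_rfl
  -- ### integral of Ψ 0 over Q
  have hΨ0int : Integrable (fun x => ∏ n ∈ Finset.Icc 1 N, α n x) Q := by
    have he : (fun x => ∏ n ∈ Finset.Icc 1 N, α n x) = fun x => ZN * L x := by
      funext x
      rw [hL x]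
      field_simp
    rw [he]
    exact hLint.const_mul ZN
  have hΨ0 : ∫⁻ z, Ψ 0 z ∂Q = ENNReal.ofReal ZN := by
    have : ∫⁻ z, Ψ 0 z ∂Q
        = ENNReal.ofReal (∫ x, ∏ n ∈ Finset.Icc 1 N, α n x ∂Q) := by
      rw [ofReal_integral_eq_lintegral_ofReal hΨ0int
        (Filter.Eventually.of_forall fun x => le_of_lt (hppos 1 N x))]
    rw [this, hZN]
  -- ### the law of X 1 i is Q
  have hlaw : ∀ i, Measure.map (X 1 i) P = Q := by
    intro i
    have hXm1 : Measurable[mΩ] (X 1 i) := hXm 1 le_rfl (by omega) i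
    refine Measure.ext fun A hA => ?_
    rw [Measure.map_apply hXm1 hA]
    set f : Fin M → (ℕ → 𝒳) → ℝ :=
      fun k => if k = i then A.indicator (fun _ => (1:ℝ)) else fun _ => 1 with hf
    have hfm : ∀ k, Measurable (f k) := by
      intro k
      by_cases h : k = i
      · simp only [hf, if_pos h]; exact measurable_const.indicator hA
      · simp only [hf, if_neg h]; exact measurable_const
    have hfb : ∀ k, ∃ C, ∀ x, |f k x| ≤ C := by
      intro k
      refine ⟨1, fun x => ?_⟩
      by_cases h : k = i
      · simp only [hf, if_pos h, Set.indicator]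
        split <;> simp
      · simp [hf, if_neg h]
    have hmain := hinit f hfm hfb
    have hL1 : ∀ ω, ∏ k, f k (X 1 k ω) = (X 1 i ⁻¹' A).indicator (fun _ => (1:ℝ)) ω := by
      intro ω
      rw [Finset.prod_eq_single i (fun b _ hb => by simp [hf, if_neg hb])
        (fun h => absurd (Finset.mem_univ i) h)]
      simp only [hf, if_pos rfl]
      by_cases h : X 1 i ω ∈ A
      · rw [Set.indicator_of_mem h, Set.indicator_of_mem (by exact h)]
      · rw [Set.indicator_of_notMem h, Set.indicator_of_notMem (by exact h)]
    have hR1 : ∏ k, ∫ y, f k y ∂Q = (Q A).toReal := by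
      rw [Finset.prod_eq_single i (fun b _ hb => by
          simp only [hf, if_neg hb]; simp)
        (fun h => absurd (Finset.mem_univ i) h)]
      simp only [hf, if_pos rfl]
      rw [integral_indicator_const (1:ℝ) hA]
      simp; rfl
    rw [funext hL1, hR1] at hmain
    rw [integral_indicator_const (1:ℝ) (hXm1 hA)] at hmain
    simp only [smul_eq_mul, mul_one] at hmain
    exact (ENNReal.toReal_eq_toReal_iff' (measure_ne_top _ _) (measure_ne_top _ _)).1 hmain
  -- ### main induction
  have main : ∀ s, s ≤ r → ∀ i,
      ∫⁻ ω, 𝕎 s ω * ENNReal.ofReal (v (s+1) i ω) * H (τ (s+1)) (X (s+1) i ω) ∂P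
        = ENNReal.ofReal ZN := by
    intro s
    induction s with
    | zero =>
        intro _ i
        have hXm1 : Measurable[mΩ] (X 1 i) := hXm 1 le_rfl (by omega) i
        have h𝕎0 : ∀ ω, 𝕎 0 ω = 1 := by
          intro ω; simp [h𝕎]
        have hv1 : ∀ ω, ENNReal.ofReal (v 1 i ω) = Φ 0 (τ 1) (X 1 i ω) := by
          intro ω
          rw [hv 1 le_rfl (by omega) i ω]
          simp [hΦ, hτ0]
        calc ∫⁻ ω, 𝕎 0 ω * ENNReal.ofReal (v 1 i ω) * H (τ 1) (X 1 i ω) ∂P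
            = ∫⁻ ω, (fun y => Φ 0 (τ 1) y * H (τ 1) y) (X 1 i ω) ∂P := by
              refine lintegral_congr fun ω => ?_
              rw [h𝕎0 ω, hv1 ω, one_mul]
          _ = ∫⁻ y, Φ 0 (τ 1) y * H (τ 1) y ∂(Measure.map (X 1 i) P) :=
              (lintegral_map ((hΦm 0 (τ 1)).mul (hHm (τ 1))) hXm1).symm
          _ = ∫⁻ y, Φ 0 (τ 1) y * H (τ 1) y ∂Q := by rw [hlaw i]
          _ = ∫⁻ z, Ψ 0 z ∂(Q.bind (κ (τ 1))) :=
              hbindver 0 (τ 1) (by omega) (hτle 1 (by omega)) Q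
          _ = ∫⁻ z, Ψ 0 z ∂Q := by rw [hκQ (τ 1) (hτle 1 (by omega))]
          _ = ENNReal.ofReal ZN := hΨ0
    | succ s ih =>
        intro hsr i
        -- s + 1 ≤ r; resampling happens at stage s+1
        have hs1r : s + 1 ≤ r := hsr
        have hsr' : s ≤ r := by omega
        have h1s1 : 1 ≤ s + 1 := by omega
        have hs1r1 : s + 1 ≤ r + 1 := by omega
        have ihall := ih hsr'
        -- catenated weight splits
        have h𝕎split : ∀ ω, 𝕎 (s+1) ω = 𝕎 s ω * ENNReal.ofReal (vbar (s+1) ω) := by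
          intro ω
          simp only [h𝕎]
          rw [Finset.prod_Icc_succ_top (by omega)]
        -- ===== resampling step =====
        have hCR : ∀ i, ∫⁻ ω, 𝕎 (s+1) ω * H (τ (s+1)) (Xbar (s+1) i ω) ∂P
            = ENNReal.ofReal ZN := by
          intro i
          -- indicators
          set A : (Fin M → Fin M) → Set Ω :=
            fun js => {ω' | ∀ k, I (s+1) k ω' = js k} with hA
          set ind : (Fin M → Fin M) → Ω → ℝ :=
            fun js ω => (A js).indicator (fun _ => (1:ℝ)) ω with hind
          have hindint : ∀ js, Integrable (ind js) P := by
            intro js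
            by_contra hni
            have h0 : P[ind js | 𝓕 (2*(s+1)-1)] = 0 := condExp_of_not_integrable hni
            have hres := hresample (s+1) h1s1 hs1r js
            rw [h0] at hres
            haveI : (MeasureTheory.ae P).NeBot := ae_neBot.2 (IsProbabilityMeasure.ne_zero P)
            obtain ⟨ω, hω⟩ := hres.exists
            have hpos : 0 < ∏ k, V (s+1) (js k) ω :=
              Finset.prod_pos fun k _ => hVpos (s+1) h1s1 hs1r1 (js k) ω
            simp only [Pi.zero_apply] at hω
            rw [← hω] at hpos
            exact lt_irrefl _ hpos
          -- F js measurable w.r.t. 𝓕 (2(s+1)-1)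
          have hFjs : ∀ j : Fin M, Measurable[𝓕 (2*(s+1)-1)]
              (fun ω => 𝕎 (s+1) ω * H (τ (s+1)) (X (s+1) j ω)) := by
            intro j
            exact (h𝕎mF (s+1) hs1r1).mul ((hHm (τ (s+1))).comp (hXmeas (s+1) h1s1 hs1r1 j))
          -- decomposition
          have hdec : ∀ ω, 𝕎 (s+1) ω * H (τ (s+1)) (Xbar (s+1) i ω)
              = ∑ js : Fin M → Fin M, ENNReal.ofReal (ind js ω)
                  * (𝕎 (s+1) ω * H (τ (s+1)) (X (s+1) (js i) ω)) := by
            intro ω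
            have hzero : ∀ js : Fin M → Fin M, js ≠ (fun k => I (s+1) k ω) →
                ENNReal.ofReal (ind js ω) = 0 := by
              intro js hjs
              have hnm : ω ∉ A js := by
                intro hmem
                exact hjs (funext fun k => (hmem k).symm)
              simp [hind, Set.indicator_of_notMem hnm]
            rw [Finset.sum_eq_single (fun k => I (s+1) k ω)
              (fun js _ hjs => by rw [hzero js hjs, zero_mul])
              (fun h => absurd (Finset.mem_univ _) h)]
            have hmem : ω ∈ A (fun k => I (s+1) k ω) := fun k => rfl
            have hone : ENNReal.ofReal (ind (fun k => I (s+1) k ω) ω) = 1 := by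
              simp [hind, Set.indicator_of_mem hmem]
            rw [hone, one_mul, ← hXbarI (s+1) h1s1 hs1r i ω]
          -- sum/integral exchange and pull-out per js
          have hstep1 : ∫⁻ ω, 𝕎 (s+1) ω * H (τ (s+1)) (Xbar (s+1) i ω) ∂P
              = ∑ js : Fin M → Fin M, ∫⁻ ω, ENNReal.ofReal (ind js ω)
                  * (𝕎 (s+1) ω * H (τ (s+1)) (X (s+1) (js i) ω)) ∂P := by
            rw [lintegral_congr hdec]
            refine lintegral_finset_sum' _ fun js _ => ?_
            exact (ENNReal.measurable_ofReal.comp_aemeasurable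
              (hindint js).aemeasurable).mul
              (((hFjs (js i)).mono (h𝓕le _) le_rfl).aemeasurable)
          have hstep2 : ∀ js : Fin M → Fin M,
              ∫⁻ ω, ENNReal.ofReal (ind js ω)
                  * (𝕎 (s+1) ω * H (τ (s+1)) (X (s+1) (js i) ω)) ∂P
              = ∫⁻ ω, ENNReal.ofReal (∏ k, V (s+1) (js k) ω)
                  * (𝕎 (s+1) ω * H (τ (s+1)) (X (s+1) (js i) ω)) ∂P := by
            intro js
            refine smc_pullout (h𝓕le _) (hindint js) ?_ (hresample (s+1) h1s1 hs1r js)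
              (hFjs (js i))
            intro ω
            simp only [hind, Set.indicator]
            split <;> norm_num
          -- recombination
          have hcomb : ∀ ω,
              ∑ js : Fin M → Fin M, ENNReal.ofReal (∏ k, V (s+1) (js k) ω)
                  * (𝕎 (s+1) ω * H (τ (s+1)) (X (s+1) (js i) ω))
              = ∑ j : Fin M, ENNReal.ofReal (V (s+1) j ω)
                  * (𝕎 (s+1) ω * H (τ (s+1)) (X (s+1) j ω)) := by
            intro ω
            set u : Fin M → ℝ≥0∞ := fun j => ENNReal.ofReal (V (s+1) j ω) with hu
            set e : Fin M → ℝ≥0∞ := fun j => H (τ (s+1)) (X (s+1) j ω) with he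
            have husum : ∑ j, u j = 1 := by
              rw [hu, ← ENNReal.ofReal_sum_of_nonneg
                (fun j _ => le_of_lt (hVpos (s+1) h1s1 hs1r1 j ω))]
              rw [hVsum (s+1) h1s1 hs1r1 ω]
              simp
            have hofReal : ∀ js : Fin M → Fin M,
                ENNReal.ofReal (∏ k, V (s+1) (js k) ω) = ∏ k, u (js k) := by
              intro js
              rw [hu, ENNReal.ofReal_prod_of_nonneg
                (fun k _ => le_of_lt (hVpos (s+1) h1s1 hs1r1 (js k) ω))]
            set W : Fin M → Fin M → ℝ≥0∞ := fun k x => if k = i then u x * e x else u x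
              with hW
            have hWprod : ∀ js : Fin M → Fin M,
                (∏ k, u (js k)) * e (js i) = ∏ k, W k (js k) := by
              intro js
              rw [← Finset.prod_erase_mul Finset.univ _ (Finset.mem_univ i),
                ← Finset.prod_erase_mul Finset.univ (fun k => W k (js k)) (Finset.mem_univ i)]
              have he1 : ∏ k ∈ Finset.univ.erase i, W k (js k)
                  = ∏ k ∈ Finset.univ.erase i, u (js k) := by
                refine Finset.prod_congr rfl fun k hk => ?_
                rw [hW]
                simp [Finset.ne_of_mem_erase hk]
              rw [he1, hW]
              simp only [eq_self_iff_true, if_true]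
              ring
            calc ∑ js : Fin M → Fin M, ENNReal.ofReal (∏ k, V (s+1) (js k) ω)
                  * (𝕎 (s+1) ω * H (τ (s+1)) (X (s+1) (js i) ω))
                = ∑ js : Fin M → Fin M, 𝕎 (s+1) ω * ((∏ k, u (js k)) * e (js i)) := by
                  refine Finset.sum_congr rfl fun js _ => ?_
                  rw [hofReal js]; ring
              _ = 𝕎 (s+1) ω * ∑ js : Fin M → Fin M, ∏ k, W k (js k) := by
                  rw [Finset.mul_sum]
                  exact Finset.sum_congr rfl fun js _ => by rw [hWprod js]
              _ = 𝕎 (s+1) ω * ∏ k, ∑ x, W k x := by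
                  congr 1
                  exact (Fintype.prod_sum W).symm
              _ = 𝕎 (s+1) ω * ∑ x, W i x := by
                  congr 1
                  refine Finset.prod_eq_single i (fun k _ hk => ?_)
                    (fun h => absurd (Finset.mem_univ i) h)
                  have : ∀ x, W k x = u x := fun x => by rw [hW]; simp [hk]
                  simp_rw [this]
                  exact husum
              _ = ∑ j : Fin M, ENNReal.ofReal (V (s+1) j ω)
                  * (𝕎 (s+1) ω * H (τ (s+1)) (X (s+1) j ω)) := by
                  rw [Finset.mul_sum]
                  refine Finset.sum_congr rfl fun j _ => ?_
                  rw [hW]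
                  simp only [eq_self_iff_true, if_true, hu, he]
                  ring
          -- rewrite each summand via V·vbar = v/M
          have hterm : ∀ j ω, ENNReal.ofReal (V (s+1) j ω)
                  * (𝕎 (s+1) ω * H (τ (s+1)) (X (s+1) j ω))
              = ENNReal.ofReal ((M:ℝ)⁻¹)
                  * (𝕎 s ω * ENNReal.ofReal (v (s+1) j ω) * H (τ (s+1)) (X (s+1) j ω)) := by
            intro j ω
            rw [h𝕎split ω]
            have : ENNReal.ofReal (V (s+1) j ω) * ENNReal.ofReal (vbar (s+1) ω)
                = ENNReal.ofReal (v (s+1) j ω) * ENNReal.ofReal ((M:ℝ)⁻¹) := by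
              rw [← ENNReal.ofReal_mul (le_of_lt (hVpos (s+1) h1s1 hs1r1 j ω)),
                hVvbar (s+1) h1s1 hs1r1 j ω,
                ENNReal.ofReal_mul (le_of_lt (hvpos (s+1) h1s1 hs1r1 j ω))]
            calc ENNReal.ofReal (V (s+1) j ω)
                  * (𝕎 s ω * ENNReal.ofReal (vbar (s+1) ω) * H (τ (s+1)) (X (s+1) j ω))
                = (ENNReal.ofReal (V (s+1) j ω) * ENNReal.ofReal (vbar (s+1) ω))
                  * (𝕎 s ω * H (τ (s+1)) (X (s+1) j ω)) := by ring
              _ = (ENNReal.ofReal (v (s+1) j ω) * ENNReal.ofReal ((M:ℝ)⁻¹))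
                  * (𝕎 s ω * H (τ (s+1)) (X (s+1) j ω)) := by rw [this]
              _ = ENNReal.ofReal ((M:ℝ)⁻¹)
                  * (𝕎 s ω * ENNReal.ofReal (v (s+1) j ω) * H (τ (s+1)) (X (s+1) j ω)) := by
                  ring
          -- put it together
          have hMne : (ENNReal.ofReal ((M:ℝ)⁻¹)) ≠ ⊤ := ofReal_ne_top
          calc ∫⁻ ω, 𝕎 (s+1) ω * H (τ (s+1)) (Xbar (s+1) i ω) ∂P
              = ∑ js : Fin M → Fin M, ∫⁻ ω, ENNReal.ofReal (ind js ω)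
                  * (𝕎 (s+1) ω * H (τ (s+1)) (X (s+1) (js i) ω)) ∂P := hstep1
            _ = ∑ js : Fin M → Fin M, ∫⁻ ω, ENNReal.ofReal (∏ k, V (s+1) (js k) ω)
                  * (𝕎 (s+1) ω * H (τ (s+1)) (X (s+1) (js i) ω)) ∂P := by
                exact Finset.sum_congr rfl fun js _ => hstep2 js
            _ = ∫⁻ ω, ∑ js : Fin M → Fin M, ENNReal.ofReal (∏ k, V (s+1) (js k) ω)
                  * (𝕎 (s+1) ω * H (τ (s+1)) (X (s+1) (js i) ω)) ∂P := by
                refine (lintegral_finset_sum' _ fun js _ => ?_).symm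
                refine ((Finset.measurable_prod _ fun k _ =>
                  ((hVmF (s+1) h1s1 hs1r1 (js k)).mono (h𝓕le _) le_rfl)).ennreal_ofReal.mul
                  ((hFjs (js i)).mono (h𝓕le _) le_rfl)).aemeasurable
            _ = ∫⁻ ω, ∑ j : Fin M, ENNReal.ofReal (V (s+1) j ω)
                  * (𝕎 (s+1) ω * H (τ (s+1)) (X (s+1) j ω)) ∂P := lintegral_congr hcomb
            _ = ∑ j : Fin M, ∫⁻ ω, ENNReal.ofReal (V (s+1) j ω)
                  * (𝕎 (s+1) ω * H (τ (s+1)) (X (s+1) j ω)) ∂P := by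
                refine lintegral_finset_sum' _ fun j _ => ?_
                exact (((hVmF (s+1) h1s1 hs1r1 j).mono (h𝓕le _) le_rfl).ennreal_ofReal.mul
                  ((hFjs j).mono (h𝓕le _) le_rfl)).aemeasurable
            _ = ∑ j : Fin M, ∫⁻ ω, ENNReal.ofReal ((M:ℝ)⁻¹)
                  * (𝕎 s ω * ENNReal.ofReal (v (s+1) j ω) * H (τ (s+1)) (X (s+1) j ω)) ∂P := by
                refine Finset.sum_congr rfl fun j _ => lintegral_congr fun ω => hterm j ω
            _ = ∑ j : Fin M, ENNReal.ofReal ((M:ℝ)⁻¹)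
                  * ∫⁻ ω, 𝕎 s ω * ENNReal.ofReal (v (s+1) j ω)
                      * H (τ (s+1)) (X (s+1) j ω) ∂P := by
                refine Finset.sum_congr rfl fun j _ => lintegral_const_mul' _ _ hMne
            _ = ∑ _j : Fin M, ENNReal.ofReal ((M:ℝ)⁻¹) * ENNReal.ofReal ZN := by
                refine Finset.sum_congr rfl fun j _ => by rw [ihall j]
            _ = ENNReal.ofReal ZN := by
                rw [Finset.sum_const, Finset.card_univ, Fintype.card_fin]
                rw [ENNReal.ofReal_inv_of_pos (by exact_mod_cast hM), ENNReal.ofReal_natCast]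
                rw [nsmul_eq_mul, ← mul_assoc]
                rw [ENNReal.mul_inv_cancel (by exact_mod_cast (by omega : M ≠ 0))
                  (natCast_ne_top M), one_mul]
        -- ===== propagation step =====
        -- target: ∫⁻ 𝕎 (s+1) * ofReal (v (s+2) i) * H (τ (s+2)) (X (s+2) i) = ofReal ZN
        have h1s2 : (1:ℕ) ≤ s + 2 := by omega
        have hs2r1 : s + 2 ≤ r + 1 := by omega
        have hXm2 : Measurable[mΩ] (X (s+2) i) := hXm (s+2) h1s2 hs2r1 i
        have hτab : τ (s+1) ≤ τ (s+2) := le_of_lt (hτmono (s+1) hs1r)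
        have hτbN : τ (s+2) ≤ N := hτle (s+2) hs2r1
        set G : (ℕ → 𝒳) → ℝ≥0∞ := fun y => Φ (τ (s+1)) (τ (s+2)) y * H (τ (s+2)) y with hG
        have hGm : Measurable G := (hΦm _ _).mul (hHm _)
        set Gn : ℕ → (ℕ → 𝒳) → ℝ≥0∞ := fun n y => min (G y) n with hGn
        set gn : ℕ → (ℕ → 𝒳) → ℝ := fun n y => (Gn n y).toReal with hgn
        have hGnm : ∀ n, Measurable (Gn n) := fun n => hGm.min measurable_const
        have hGnne : ∀ n y, Gn n y ≠ ⊤ := fun n y =>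
          ne_top_of_le_ne_top (natCast_ne_top n) (min_le_right _ _)
        have hgnm : ∀ n, Measurable (gn n) := fun n => (hGnm n).ennreal_toReal
        have hgn0 : ∀ n y, 0 ≤ gn n y := fun n y => ENNReal.toReal_nonneg
        have hgnbdd : ∀ n y, |gn n y| ≤ (n : ℝ) := by
          intro n y
          rw [abs_of_nonneg (hgn0 n y)]
          simpa using ENNReal.toReal_mono (natCast_ne_top n) (min_le_right (G y) (n:ℝ≥0∞))
        have hGnmono : ∀ y, Monotone fun n : ℕ => Gn n y := by
          intro y a b hab
          exact min_le_min le_rfl (Nat.cast_le.2 hab)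
        have hGnsup : ∀ y, (⨆ n : ℕ, Gn n y) = G y := fun y => smc_iSup_min (G y)
        -- per-truncation conditional expectation from hprop
        have hcond : ∀ n : ℕ, P[(fun ω => gn n (X (s+2) i ω)) | 𝓕 (2*(s+1))]
            =ᵐ[P] fun ω => ∫ y, gn n y ∂(κ (τ (s+1)) (Xbar (s+1) i ω)) := by
          intro n
          set f : Fin M → (ℕ → 𝒳) → ℝ := fun k => if k = i then gn n else fun _ => 1 with hf
          have hfm : ∀ k, Measurable (f k) := by
            intro k
            by_cases h : k = i
            · simp only [hf, if_pos h]; exact hgnm n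
            · simp only [hf, if_neg h]; exact measurable_const
          have hfb : ∀ k, ∃ C, ∀ x, |f k x| ≤ C := by
            intro k
            by_cases h : k = i
            · exact ⟨n, fun x => by simp only [hf, if_pos h]; exact hgnbdd n x⟩
            · exact ⟨1, fun x => by simp [hf, if_neg h]⟩
          have h1 := hprop (s+1) h1s1 hs1r f hfm hfb
          have hL1 : (fun ω => ∏ k, f k (X (s+1+1) k ω)) = fun ω => gn n (X (s+2) i ω) := by
            funext ω
            rw [Finset.prod_eq_single i (fun b _ hb => by simp [hf, if_neg hb])
              (fun h => absurd (Finset.mem_univ i) h)]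
            simp [hf]
          have hR1 : (fun ω => ∏ k, ∫ y, f k y ∂(κ (τ (s+1)) (Xbar (s+1) k ω)))
              = fun ω => ∫ y, gn n y ∂(κ (τ (s+1)) (Xbar (s+1) i ω)) := by
            funext ω
            rw [Finset.prod_eq_single i (fun b _ hb => by
                simp only [hf, if_neg hb]
                simp)
              (fun h => absurd (Finset.mem_univ i) h)]
            simp [hf]
          rw [hL1, hR1] at h1
          exact h1
        -- apply pull-out with F = 𝕎 (s+1)
        have h𝕎s1 : Measurable[𝓕 (2*(s+1))] (𝕎 (s+1)) :=
          (h𝕎mF (s+1) hs1r1).mono (h𝓕mono (by omega)) le_rfl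
        have hpull : ∀ n : ℕ,
            ∫⁻ ω, Gn n (X (s+2) i ω) * 𝕎 (s+1) ω ∂P
            = ∫⁻ ω, (∫⁻ y, Gn n y ∂(κ (τ (s+1)) (Xbar (s+1) i ω))) * 𝕎 (s+1) ω ∂P := by
          intro n
          have hgint : Integrable (fun ω => gn n (X (s+2) i ω)) P :=
            smc_int_bdd ((hgnm n).comp hXm2).aestronglyMeasurable
              (fun ω => hgnbdd n (X (s+2) i ω))
          have h2 := smc_pullout (h𝓕le (2*(s+1))) hgint
            (fun ω => hgn0 n (X (s+2) i ω)) (hcond n) h𝕎s1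
          calc ∫⁻ ω, Gn n (X (s+2) i ω) * 𝕎 (s+1) ω ∂P
              = ∫⁻ ω, ENNReal.ofReal (gn n (X (s+2) i ω)) * 𝕎 (s+1) ω ∂P := by
                refine lintegral_congr fun ω => ?_
                rw [hgn, ENNReal.ofReal_toReal (hGnne n _)]
            _ = ∫⁻ ω, ENNReal.ofReal (∫ y, gn n y ∂(κ (τ (s+1)) (Xbar (s+1) i ω)))
                  * 𝕎 (s+1) ω ∂P := h2
            _ = ∫⁻ ω, (∫⁻ y, Gn n y ∂(κ (τ (s+1)) (Xbar (s+1) i ω))) * 𝕎 (s+1) ω ∂P := by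
                refine lintegral_congr fun ω => ?_
                congr 1
                have hgint' : Integrable (gn n) (κ (τ (s+1)) (Xbar (s+1) i ω)) :=
                  smc_int_bdd (hgnm n).aestronglyMeasurable (hgnbdd n)
                rw [ofReal_integral_eq_lintegral_ofReal hgint'
                  (Filter.Eventually.of_forall (hgn0 n))]
                refine lintegral_congr fun y => ?_
                rw [hgn, ENNReal.ofReal_toReal (hGnne n _)]
        -- monotone limits on both sides
        have hXbarm1 : Measurable[mΩ] (Xbar (s+1) i) := hXbarm (s+1) h1s1 hs1r i
        have h𝕎m1 : Measurable[mΩ] (𝕎 (s+1)) := h𝕎m (s+1) hs1r1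
        have hLHS : (⨆ n : ℕ, ∫⁻ ω, Gn n (X (s+2) i ω) * 𝕎 (s+1) ω ∂P)
            = ∫⁻ ω, G (X (s+2) i ω) * 𝕎 (s+1) ω ∂P := by
          have hswap := lintegral_iSup (μ := P)
            (f := fun n ω => Gn n (X (s + 2) i ω) * 𝕎 (s + 1) ω)
            (fun n => (((hGnm n).comp hXm2).mul h𝕎m1 :))
            (fun a b hab ω => mul_le_mul_left (hGnmono _ hab) _)
          rw [← hswap]
          refine lintegral_congr fun ω => ?_
          show (⨆ n : ℕ, Gn n (X (s + 2) i ω) * 𝕎 (s + 1) ω) = G (X (s + 2) i ω) * 𝕎 (s + 1) ω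
          rw [← ENNReal.iSup_mul]
          congr 1
          exact hGnsup _
        have hkermeas : ∀ n : ℕ, Measurable[mΩ]
            (fun ω => ∫⁻ y, Gn n y ∂(κ (τ (s+1)) (Xbar (s+1) i ω))) := by
          intro n
          exact (Measurable.lintegral_kernel_prod_right'
            ((hGnm n).comp measurable_snd)).comp hXbarm1
        have hRHS : (⨆ n : ℕ, ∫⁻ ω, (∫⁻ y, Gn n y ∂(κ (τ (s+1)) (Xbar (s+1) i ω)))
              * 𝕎 (s+1) ω ∂P)
            = ∫⁻ ω, H (τ (s+1)) (Xbar (s+1) i ω) * 𝕎 (s+1) ω ∂P := by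
          have hswap := lintegral_iSup (μ := P)
            (f := fun n ω => (∫⁻ y, Gn n y ∂(κ (τ (s+1)) (Xbar (s+1) i ω))) * 𝕎 (s + 1) ω)
            (fun n => ((hkermeas n).mul h𝕎m1 :))
            (fun a b hab ω => mul_le_mul_left
              (lintegral_mono fun y => hGnmono y hab) _)
          rw [← hswap]
          refine lintegral_congr fun ω => ?_
          show (⨆ n : ℕ, (∫⁻ y, Gn n y ∂(κ (τ (s+1)) (Xbar (s+1) i ω))) * 𝕎 (s + 1) ω)
            = H (τ (s+1)) (Xbar (s+1) i ω) * 𝕎 (s + 1) ω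
          rw [← ENNReal.iSup_mul]
          congr 1
          calc ⨆ n : ℕ, ∫⁻ y, Gn n y ∂(κ (τ (s+1)) (Xbar (s+1) i ω))
              = ∫⁻ y, ⨆ n : ℕ, Gn n y ∂(κ (τ (s+1)) (Xbar (s+1) i ω)) :=
                (lintegral_iSup hGnm (fun a b hab y => hGnmono y hab)).symm
            _ = ∫⁻ y, G y ∂(κ (τ (s+1)) (Xbar (s+1) i ω)) :=
                lintegral_congr fun y => hGnsup y
            _ = ∫⁻ z, Ψ (τ (s+1)) z
                  ∂((κ (τ (s+1)) (Xbar (s+1) i ω)).bind (κ (τ (s+2)))) :=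
                hbindver (τ (s+1)) (τ (s+2)) hτab hτbN _
            _ = H (τ (s+1)) (Xbar (s+1) i ω) := by
                rw [hκcomp (τ (s+1)) (τ (s+2)) hτab hτbN]
        -- conclude the inductive step
        have hv2 : ∀ ω, ENNReal.ofReal (v (s+2) i ω) = Φ (τ (s+1)) (τ (s+2)) (X (s+2) i ω) := by
          intro ω
          rw [hv (s+2) h1s2 hs2r1 i ω]
          rfl
        calc ∫⁻ ω, 𝕎 (s+1) ω * ENNReal.ofReal (v (s+1+1) i ω)
              * H (τ (s+1+1)) (X (s+1+1) i ω) ∂P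
            = ∫⁻ ω, G (X (s+2) i ω) * 𝕎 (s+1) ω ∂P := by
              refine lintegral_congr fun ω => ?_
              rw [hv2 ω, hG]
              ring
          _ = ⨆ n : ℕ, ∫⁻ ω, Gn n (X (s+2) i ω) * 𝕎 (s+1) ω ∂P := hLHS.symm
          _ = ⨆ n : ℕ, ∫⁻ ω, (∫⁻ y, Gn n y ∂(κ (τ (s+1)) (Xbar (s+1) i ω)))
                * 𝕎 (s+1) ω ∂P := by simp_rw [hpull]
          _ = ∫⁻ ω, H (τ (s+1)) (Xbar (s+1) i ω) * 𝕎 (s+1) ω ∂P := hRHS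
          _ = ∫⁻ ω, 𝕎 (s+1) ω * H (τ (s+1)) (Xbar (s+1) i ω) ∂P := by
              refine lintegral_congr fun ω => mul_comm _ _
          _ = ENNReal.ofReal ZN := hCR i
  -- ### conclusion
  have hHtop : ∀ x, H N x = 1 := by
    intro x
    have hΨN : ∀ y, Ψ N y = 1 := by
      intro y
      simp only [hΨ]
      rw [Finset.Icc_eq_empty (by omega), Finset.prod_empty, ENNReal.ofReal_one]
    show ∫⁻ y, Ψ N y ∂(κ N x) = 1
    rw [lintegral_congr hΨN]
    simp
  have hZNMm : Measurable[mΩ] ZNM := by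
    have : ZNM = fun ω => ∏ t ∈ Finset.Icc 1 (r+1), vbar t ω := funext hZNM
    rw [this]
    refine Finset.measurable_prod _ fun t ht => ?_
    obtain ⟨ht1, ht2⟩ := Finset.mem_Icc.1 ht
    exact (hvbarmF t ht1 ht2).mono (h𝓕le _) le_rfl
  have hZNM0 : ∀ ω, 0 ≤ ZNM ω := by
    intro ω
    rw [hZNM ω]
    exact le_of_lt (Finset.prod_pos fun t ht => by
      obtain ⟨ht1, ht2⟩ := Finset.mem_Icc.1 ht
      exact hvbarpos t ht1 ht2 ω)
  have hofZNM : ∀ ω, ENNReal.ofReal (ZNM ω) = 𝕎 (r+1) ω := by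
    intro ω
    rw [hZNM ω, h𝕎]
    exact ENNReal.ofReal_prod_of_nonneg fun t ht => by
      obtain ⟨ht1, ht2⟩ := Finset.mem_Icc.1 ht
      exact le_of_lt (hvbarpos t ht1 ht2 ω)
  have hfinal : ∫⁻ ω, ENNReal.ofReal (ZNM ω) ∂P = ENNReal.ofReal ZN := by
    have h𝕎split : ∀ ω, 𝕎 (r+1) ω = 𝕎 r ω * ENNReal.ofReal (vbar (r+1) ω) := by
      intro ω
      simp only [h𝕎]
      rw [Finset.prod_Icc_succ_top (by omega)]
    have hsplit2 : ∀ ω, ENNReal.ofReal (vbar (r+1) ω)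
        = ∑ j, ENNReal.ofReal (v (r+1) j ω) * ENNReal.ofReal ((M:ℝ)⁻¹) := by
      intro ω
      rw [hvbar (r+1) (by omega) le_rfl ω, div_eq_mul_inv, Finset.sum_mul,
        ENNReal.ofReal_sum_of_nonneg (fun j _ => mul_nonneg
          (le_of_lt (hvpos (r+1) (by omega) le_rfl j ω))
          (by positivity))]
      refine Finset.sum_congr rfl fun j _ => ?_
      rw [ENNReal.ofReal_mul (le_of_lt (hvpos (r+1) (by omega) le_rfl j ω))]
    calc ∫⁻ ω, ENNReal.ofReal (ZNM ω) ∂P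
        = ∫⁻ ω, ∑ j, ENNReal.ofReal ((M:ℝ)⁻¹)
            * (𝕎 r ω * ENNReal.ofReal (v (r+1) j ω) * H (τ (r+1)) (X (r+1) j ω)) ∂P := by
          refine lintegral_congr fun ω => ?_
          rw [hofZNM ω, h𝕎split ω, hsplit2 ω, Finset.mul_sum]
          refine Finset.sum_congr rfl fun j _ => ?_
          rw [hτN, hHtop (X (r+1) j ω)]
          ring
      _ = ∑ j : Fin M, ∫⁻ ω, ENNReal.ofReal ((M:ℝ)⁻¹)
            * (𝕎 r ω * ENNReal.ofReal (v (r+1) j ω) * H (τ (r+1)) (X (r+1) j ω)) ∂P := by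
          refine lintegral_finset_sum' _ fun j _ => ?_
          refine (measurable_const.mul (((h𝕎m r (by omega)).mul
            (((hvmF (r+1) (by omega) le_rfl j).mono (h𝓕le _) le_rfl).ennreal_ofReal)).mul
            ((hHm _).comp (hXm (r+1) (by omega) le_rfl j)))).aemeasurable
      _ = ∑ _j : Fin M, ENNReal.ofReal ((M:ℝ)⁻¹) * ENNReal.ofReal ZN := by
          refine Finset.sum_congr rfl fun j _ => ?_
          rw [lintegral_const_mul' _ _ ofReal_ne_top, main r le_rfl j]
      _ = ENNReal.ofReal ZN := by
          rw [Finset.sum_const, Finset.card_univ, Fintype.card_fin]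
          rw [ENNReal.ofReal_inv_of_pos (by exact_mod_cast hM), ENNReal.ofReal_natCast]
          rw [nsmul_eq_mul, ← mul_assoc]
          rw [ENNReal.mul_inv_cancel (by exact_mod_cast (by omega : M ≠ 0))
            (natCast_ne_top M), one_mul]
  calc ∫ ω, ZNM ω ∂P = (∫⁻ ω, ENNReal.ofReal (ZNM ω) ∂P).toReal :=
        integral_eq_lintegral_of_nonneg_ae (Filter.Eventually.of_forall hZNM0)
          hZNMm.aestronglyMeasurable
    _ = ZN := by rw [hfinal, ENNReal.toReal_ofReal (le_of_lt hZNpos)]
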